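/- arXiv:2501.05377 — 3 statements merged into one kernel-verified Lean document; each statement's English description precedes it below -/
import Mathlib

section
/- Let β be a positive natural number and let C, A₁, A₂, V₁, V₂ be finite sets with C ⊆ A₁, C ⊆ A₂, |C| ≥ β, 2·|A₁| < 3·β, 2·|A₂| < 3·β, V₁ ⊆ A₁, V₂ ⊆ A₂, |V₁| ≥ β, and |V₂| ≥ β. Then V₁ ∩ V₂ ∩ C is nonempty. -/
/-
Inside `A₁` the quorum `V₁` and the core `C` overlap in at least `|V₁| + |C| - |A₁|` members, and
likewise for `V₂` inside `A₂`. Both overlaps lie in `C`, so by pigeonhole they meet as soon as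
`|C| < (|V₁| + |C| - |A₁|) + (|V₂| + |C| - |A₂|)`, i.e. `|A₁| + |A₂| < |V₁| + |V₂| + |C|`; the
left side is below `3β` and the right side is at least `3β`.
-/

namespace Finset

theorem card_add_card_le_card_add_card_inter {α : Type*} [DecidableEq α] {s t u : Finset α}
    (hts : t ⊆ s) (hus : u ⊆ s) : #t + #u ≤ #s + #(t ∩ u) := by
  rw [← card_union_add_card_inter]
  gcongr
  exact union_subset hts hus

end Finset

open Finset

theorem stmt_9_general {α : Type} [DecidableEq α] (β : ℕ)
    (C A₁ A₂ V₁ V₂ : Finset α) (hCA₁ : C ⊆ A₁) (hCA₂ : C ⊆ A₂)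
    (hC : β ≤ C.card) (hA₁ : 2 * A₁.card < 3 * β) (hA₂ : 2 * A₂.card < 3 * β)
    (hV₁A : V₁ ⊆ A₁) (hV₂A : V₂ ⊆ A₂) (hV₁ : β ≤ V₁.card) (hV₂ : β ≤ V₂.card) :
    (V₁ ∩ V₂ ∩ C).Nonempty := by
  have h₁ := card_add_card_le_card_add_card_inter hV₁A hCA₁
  have h₂ := card_add_card_le_card_add_card_inter hV₂A hCA₂
  rw [inter_inter_distrib_right]
  exact inter_nonempty_of_card_lt_card_add_card inter_subset_right inter_subset_right (by omega)

theorem stmt_9 {α : Type} [DecidableEq α] (β : ℕ) (hβ : 0 < β)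
    (C A₁ A₂ V₁ V₂ : Finset α) (hCA₁ : C ⊆ A₁) (hCA₂ : C ⊆ A₂)
    (hC : β ≤ C.card) (hA₁ : 2 * A₁.card < 3 * β) (hA₂ : 2 * A₂.card < 3 * β)
    (hV₁A : V₁ ⊆ A₁) (hV₂A : V₂ ⊆ A₂) (hV₁ : β ≤ V₁.card) (hV₂ : β ≤ V₂.card) :
    (V₁ ∩ V₂ ∩ C).Nonempty :=
  stmt_9_general β C A₁ A₂ V₁ V₂ hCA₁ hCA₂ hC hA₁ hA₂ hV₁A hV₂A hV₁ hV₂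
end

section
/- Let β, s, t be natural numbers with β ≥ 1 and s > 4·t. Let S be a finite index set with s − t ≤ |S| ≤ s, let C be a finite set with |C| ≥ β, and for each w ∈ S let A_w be a finite set with C ⊆ A_w and 4·|A_w| < 5·β. Let D be the set of elements x ∉ C such that x belongs to A_w for at least s − 2·t indices w ∈ S. Then 2·(|C| + |D|) < 3·β. -/
/-! Let `n` be the largest number of non-core elements in a view. Double counting the incidences
between `D` and the views gives `|D| (s - 2t) ≤ |S| n ≤ s n`, and `s - 2t > s / 2` turns this into
`|D| ≤ 2n`. Since `4 (n + |C|) < 5β` and `|C| ≥ β`, we get `2 (|C| + |D|) < 5β - 2|C| ≤ 3β`. -/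

open Finset

section

variable {ι α : Type*} [DecidableEq α]

theorem exists_sup_card_sdiff_add_card_eq {S : Finset ι} (hS : S.Nonempty) {C : Finset α}
    {A : ι → Finset α} (hCA : ∀ w ∈ S, C ⊆ A w) :
    ∃ w ∈ S, S.sup (fun w => #(A w \ C)) + #C = #(A w) := by
  obtain ⟨w, hw, hsup⟩ := S.exists_mem_eq_sup hS fun w => #(A w \ C)
  exact ⟨w, hw, hsup ▸ card_sdiff_add_card_eq_card (hCA w hw)⟩

theorem card_mul_le_card_mul_sup_card_sdiff {S : Finset ι} {C D : Finset α}
    {A : ι → Finset α} {m : ℕ} (hD : ∀ x ∈ D, x ∉ C ∧ m ≤ #{w ∈ S | x ∈ A w}) :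
    #D * m ≤ #S * S.sup (fun w => #(A w \ C)) := by
  refine card_mul_le_card_mul (fun x w => x ∈ A w) (fun x hx => (hD x hx).2) fun w hw => ?_
  refine (card_le_card fun x hx => ?_).trans (le_sup (f := fun w => #(A w \ C)) hw)
  rw [mem_bipartiteBelow] at hx
  exact mem_sdiff.2 ⟨hx.2, (hD x hx.1).1⟩

end

theorem stmt_11_general {ι α : Type} [DecidableEq α]
    (β s t : ℕ) (hs : 4 * t < s)
    (S : Finset ι) (hS_lb : (s : ℤ) - t ≤ S.card) (hS_ub : S.card ≤ s)
    (C : Finset α) (hC : β ≤ C.card)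
    (A : ι → Finset α)
    (hCA : ∀ w ∈ S, C ⊆ A w) (hA : ∀ w ∈ S, 4 * (A w).card < 5 * β)
    (D : Finset α)
    (hD : ∀ x : α, x ∈ D ↔
      x ∉ C ∧ (s : ℤ) - 2 * t ≤ (S.filter fun w => x ∈ A w).card) :
    2 * (C.card + D.card) < 3 * β := by
  set n := S.sup fun w => #(A w \ C)
  have hS : S.Nonempty := card_pos.1 (by omega)
  have hn : 4 * (n + #C) < 5 * β := by
    obtain ⟨w, hw, hnw⟩ := exists_sup_card_sdiff_add_card_eq hS hCA
    exact hnw ▸ hA w hw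
  have hcount : #D * (s - 2 * t) ≤ #S * n :=
    card_mul_le_card_mul_sup_card_sdiff fun x hx =>
      have hx := (hD x).1 hx; ⟨hx.1, by omega⟩
  have hDn : 2 * #D ≤ 4 * n := by
    refine Nat.le_of_mul_le_mul_left ?_ (show 0 < s by omega)
    calc s * (2 * #D) = 2 * s * #D := by ring
      _ ≤ 4 * (s - 2 * t) * #D := Nat.mul_le_mul_right _ (by omega)
      _ = 4 * (#D * (s - 2 * t)) := by ring
      _ ≤ 4 * (#S * n) := by gcongr
      _ ≤ s * (4 * n) := by rw [mul_left_comm]; gcongr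
  omega

theorem stmt_11 {ι α : Type} [DecidableEq ι] [DecidableEq α]
    (β s t : ℕ) (hβ : 1 ≤ β) (hs : 4 * t < s)
    (S : Finset ι) (hS_lb : (s : ℤ) - t ≤ S.card) (hS_ub : S.card ≤ s)
    (C : Finset α) (hC : β ≤ C.card)
    (A : ι → Finset α)
    (hCA : ∀ w ∈ S, C ⊆ A w) (hA : ∀ w ∈ S, 4 * (A w).card < 5 * β)
    (D : Finset α)
    (hD : ∀ x : α, x ∈ D ↔
      x ∉ C ∧ (s : ℤ) - 2 * t ≤ (S.filter fun w => x ∈ A w).card) :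
    2 * (C.card + D.card) < 3 * β :=
  stmt_11_general β s t hs S hS_lb hS_ub C hC A hCA hA D hD
end

section
/- Let β, ζ, Y, r be natural numbers with β ≥ 1, ζ ≥ 1, 16·Y < ζ, and 4·r > ζ. Let H be a finite index set with |H| + Y = r, let C be a finite set with |C| ≥ β, and for each w ∈ H let B_w be a finite set with C ⊆ B_w and 4·|B_w| < 5·β. Let D be the set of elements x ∉ C such that 16·|{w ∈ H : x ∈ B_w}| ≥ 16·r − ζ − 16·Y. Then 2·(|C| + |D|) < 3·β. -/
/-!
Double count the incidences between `D` and the honest responses. Every `x ∈ D` lies in at least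
`|H| - ζ/16` of the sets `B w`, while each `B w` has room for fewer than `5β/4 - |C|` elements
outside the core. Since `16|H| > 3ζ`, the first bound exceeds `2|H|/3`, so
`|D| ≤ 3/2 (5β/4 - |C|)`, and `|C| ≥ β` gives `|C| + |D| ≤ 11β/8 < 3β/2`.
-/

open Finset

lemma card_filter_mem_add_card_le {α : Type*} [DecidableEq α] {B C D : Finset α}
    (hCB : C ⊆ B) (hDC : Disjoint D C) : #(D.filter (· ∈ B)) + #C ≤ #B := by
  have hsub : D.filter (· ∈ B) ⊆ B \ C := fun x hx => by
    rw [mem_filter] at hx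
    exact mem_sdiff.2 ⟨hx.2, disjoint_left.1 hDC hx.1⟩
  calc #(D.filter (· ∈ B)) + #C ≤ #(B \ C) + #C := by gcongr
    _ = #B := card_sdiff_add_card_eq_card hCB

lemma two_mul_add_lt_of_mul_le {β c d h z : ℚ} (hβ : 0 < β) (hc : β ≤ c) (hd : 0 ≤ d)
    (hz : 0 ≤ z) (hzh : 3 * z < 16 * h) (hcount : d * (h - z / 16) ≤ h * (5 * β / 4 - c)) :
    2 * (c + d) < 3 * β := by
  have hh : 0 < h := by linarith
  have hdeg : d * (2 * h / 3) ≤ d * (h - z / 16) := by gcongr; linarith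
  have hdc : 2 * d / 3 ≤ 5 * β / 4 - c := by
    rw [← mul_le_mul_iff_of_pos_left hh]
    linarith
  linarith

theorem stmt_12_general {ι α : Type} [DecidableEq α]
    (β ζ Y r : ℕ) (hY : 16 * Y < ζ) (hr : ζ < 4 * r)
    (H : Finset ι) (hH : H.card + Y = r)
    (C : Finset α) (hC : β ≤ C.card)
    (B : ι → Finset α)
    (hCB : ∀ w ∈ H, C ⊆ B w) (hB : ∀ w ∈ H, 4 * (B w).card < 5 * β)
    (D : Finset α)
    (hD : ∀ x : α, x ∈ D ↔
      x ∉ C ∧ (16 * r : ℤ) - ζ - 16 * Y ≤ 16 * (H.filter fun w => x ∈ B w).card) :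
    2 * (C.card + D.card) < 3 * β := by
  obtain ⟨w₀, hw₀⟩ : H.Nonempty := card_pos.1 (by omega)
  have hDC : Disjoint D C := disjoint_left.2 fun x hx => ((hD x).1 hx).1
  have hdeg : ∀ x ∈ D, (#H : ℚ) - ζ / 16 ≤ #(H.filter fun w => x ∈ B w) := by
    intro x hx
    have hx16 := ((hD x).1 hx).2
    rw [← hH] at hx16
    have hq : ((16 * #H - ζ : ℤ) : ℚ) ≤ ((16 * #(H.filter fun w => x ∈ B w) : ℤ) : ℚ) :=
      Int.cast_le.2 (by push_cast at hx16; linarith)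
    push_cast at hq
    linarith
  have hload : ∀ w ∈ H, (#(D.filter (· ∈ B w)) : ℚ) ≤ 5 * β / 4 - #C := by
    intro w hw
    have hfit : 4 * (#(D.filter (· ∈ B w)) + #C) < 5 * β := by
      linarith [hB w hw, card_filter_mem_add_card_le (hCB w hw) hDC]
    have hq : (4 * (#(D.filter (· ∈ B w)) + #C) : ℚ) < 5 * β := by exact_mod_cast hfit
    linarith
  have hcount := card_nsmul_le_card_nsmul (fun x w => x ∈ B w) hdeg hload
  rw [nsmul_eq_mul, nsmul_eq_mul] at hcount
  have hβ : (0 : ℚ) < β := by exact_mod_cast (by linarith [hB w₀ hw₀] : 0 < β)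
  have hzh : 3 * (ζ : ℚ) < 16 * #H := by exact_mod_cast (by omega : 3 * ζ < 16 * #H)
  exact_mod_cast two_mul_add_lt_of_mul_le hβ (by exact_mod_cast hC) (by positivity)
    (by positivity) hzh hcount

theorem stmt_12 {ι α : Type} [DecidableEq ι] [DecidableEq α]
    (β ζ Y r : ℕ) (hβ : 1 ≤ β) (hζ : 1 ≤ ζ) (hY : 16 * Y < ζ) (hr : ζ < 4 * r)
    (H : Finset ι) (hH : H.card + Y = r)
    (C : Finset α) (hC : β ≤ C.card)
    (B : ι → Finset α)
    (hCB : ∀ w ∈ H, C ⊆ B w) (hB : ∀ w ∈ H, 4 * (B w).card < 5 * β)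
    (D : Finset α)
    (hD : ∀ x : α, x ∈ D ↔
      x ∉ C ∧ (16 * r : ℤ) - ζ - 16 * Y ≤ 16 * (H.filter fun w => x ∈ B w).card) :
    2 * (C.card + D.card) < 3 * β :=
  stmt_12_general β ζ Y r hY hr H hH C hC B hCB hB D hD
end
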